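/- In G = ℤ² ⋊ ℤ/2ℤ (swap action), for every n ≥ 1 the non-geodesic word w = t aⁿ t aⁿ t has a unique strictly shorter representative word that is geodesic, namely u = aⁿ t aⁿ, and every other word over A = {a, a⁻¹, t, t⁻¹} representing the same element ((n,n),1) has length at least 2n + 3 = |w|. -/

import Mathlib

/-- The coordinate-swapping automorphism of ℤ². -/
def swapAut : MulAut (Multiplicative (ℤ × ℤ)) :=
  AddEquiv.toMultiplicative (AddEquiv.prodComm : (ℤ × ℤ) ≃+ (ℤ × ℤ))

lemma swapAut_sq : swapAut ^ 2 = 1 := by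
  refine MulEquiv.ext fun z => ?_
  show swapAut (swapAut z) = z
  cases z
  rfl

/-- The action of ℤ/2ℤ on ℤ² by swapping the two coordinates. -/
def swapAction : Multiplicative (ZMod 2) →* MulAut (Multiplicative (ℤ × ℤ)) where
  toFun ε := swapAut ^ (Multiplicative.toAdd ε).val
  map_one' := rfl
  map_mul' x y := by
    show swapAut ^ _ = swapAut ^ _ * swapAut ^ _
    rw [← pow_add]
    have key : ∀ m n : ℕ, m % 2 = n % 2 → swapAut ^ m = swapAut ^ n := by
      intro m n h
      rw [← Nat.div_add_mod m 2, ← Nat.div_add_mod n 2, h, pow_add, pow_add,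
        pow_mul, pow_mul, swapAut_sq]
      simp
    apply key
    have := ZMod.val_add (Multiplicative.toAdd x) (Multiplicative.toAdd y)
    simp only [toAdd_mul] at *
    omega

/-- The group G = ℤ² ⋊ ℤ/2ℤ with the swap action. -/
abbrev GG := SemidirectProduct (Multiplicative (ℤ × ℤ)) (Multiplicative (ZMod 2)) swapAction

/-- The generator a = ((1,0), 0). -/
def ga : GG := SemidirectProduct.inl (Multiplicative.ofAdd ((1, 0) : ℤ × ℤ))

/-- The generator t = ((0,0), 1). -/
def gt : GG := SemidirectProduct.inr (Multiplicative.ofAdd (1 : ZMod 2))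

/-- The element ((x,y), ε) of G. -/
def el (x y : ℤ) (ε : ZMod 2) : GG :=
  ⟨Multiplicative.ofAdd (x, y), Multiplicative.ofAdd ε⟩

/-- The generating set A = {a, a⁻¹, t, t⁻¹}. -/
def GenSet : Set GG := {ga, ga⁻¹, gt, gt⁻¹}

/-- `w` is a word over the alphabet A. -/
def IsWord (w : List GG) : Prop := ∀ x ∈ w, x ∈ GenSet

/-- `w` is a word over A representing the group element `g` (via its product). -/
def Represents (w : List GG) (g : GG) : Prop := IsWord w ∧ w.prod = g

/-- The word length of `g`: minimal length of a word over A representing `g`. -/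
noncomputable def wordLength (g : GG) : ℕ :=
  sInf {n | ∃ w : List GG, Represents w g ∧ w.length = n}

/-- A word over A is geodesic if no strictly shorter word over A represents
the same element. -/
def IsGeodesic (w : List GG) : Prop :=
  IsWord w ∧ ∀ v : List GG, IsWord v → v.prod = w.prod → w.length ≤ v.length

open Classical in
/-- The number of t-letters of a word (occurrences of t and t⁻¹). -/
noncomputable def tCount (w : List GG) : ℕ :=
  w.countP (fun x => decide (x = gt ∨ x = gt⁻¹))

/-- The word aˣ over A: x letters `a` if x ≥ 0, |x| letters `a⁻¹` if x < 0. -/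
def apow (x : ℤ) : List GG :=
  if 0 ≤ x then List.replicate x.toNat ga else List.replicate (-x).toNat ga⁻¹

/-- The word metric on G with respect to A. -/
noncomputable def dA (g h : GG) : ℕ := wordLength (g⁻¹ * h)

/-- The point of G reached at time i along the word w (the endpoint if i
exceeds the length of w). -/
def pt (w : List GG) (i : ℕ) : GG := (w.take i).prod

/-- Words u and w synchronously k-fellow travel. -/
def FellowTravels (k : ℕ) (u w : List GG) : Prop :=
  ∀ i : ℕ, dA (pt u i) (pt w i) ≤ k

/-! Left multiplication by a letter of A adds `±1` to one coordinate of ℤ² or swaps the two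
coordinates (and flips `ε`), so the product `((x, y), ε)` of a word satisfies
`|w| = x + y + 2·#a⁻¹ + #t` and `#t ≡ ε mod 2`. For `((n, n), 1)` this gives `|w| ≥ 2n + 1`,
and `|w| < 2n + 3` forces `#a⁻¹ = 0` and `#t = 1`, i.e. `w = aʲ t aᵏ`, whose product
`((j, k), 1)` pins down `j = k = n`. -/

lemma el_zero_mul (x y x' y' : ℤ) (e' : ZMod 2) :
    el x y 0 * el x' y' e' = el (x + x') (y + y') e' := by
  ext : 1
  · rfl
  · exact one_mul _

lemma el_one_mul (x y x' y' : ℤ) (e' : ZMod 2) :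
    el x y 1 * el x' y' e' = el (x + y') (y + x') (1 + e') :=
  rfl

lemma el_inj {x y x' y' : ℤ} {e e' : ZMod 2} :
    el x y e = el x' y' e' ↔ x = x' ∧ y = y' ∧ e = e' := by
  simp [el, SemidirectProduct.ext_iff, and_assoc]

lemma ga_eq_el : ga = el 1 0 0 := rfl

lemma gt_eq_el : gt = el 0 0 1 := rfl

lemma one_eq_el : (1 : GG) = el 0 0 0 := rfl

lemma ga_inv_eq_el : ga⁻¹ = el (-1) 0 0 :=
  inv_eq_of_mul_eq_one_right <| by rw [ga_eq_el, el_zero_mul, one_eq_el]; norm_num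

lemma gt_inv : gt⁻¹ = gt :=
  inv_eq_of_mul_eq_one_right <| by rw [gt_eq_el, el_one_mul, one_eq_el]; rfl

lemma ga_ne_ga_inv : ga ≠ ga⁻¹ := by rw [ga_inv_eq_el, ga_eq_el, Ne, el_inj]; simp

lemma ga_ne_gt : ga ≠ gt := by simp [ga_eq_el, gt_eq_el, el_inj]

lemma ga_inv_ne_gt : ga⁻¹ ≠ gt := by simp [ga_inv_eq_el, gt_eq_el, el_inj]

lemma mem_genSet_iff {s : GG} : s ∈ GenSet ↔ s = ga ∨ s = ga⁻¹ ∨ s = gt := by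
  simp [GenSet, gt_inv]

lemma isWord_cons {s : GG} {w : List GG} : IsWord (s :: w) ↔ s ∈ GenSet ∧ IsWord w :=
  List.forall_mem_cons

lemma tCount_append (v w : List GG) : tCount (v ++ w) = tCount v + tCount w :=
  List.countP_append

lemma tCount_cons_gt (w : List GG) : tCount (gt :: w) = tCount w + 1 := by
  simp [tCount]

lemma tCount_cons_of_ne {s : GG} (hs : s ≠ gt) (w : List GG) : tCount (s :: w) = tCount w := by
  simp [tCount, gt_inv, hs]

lemma IsWord.prod_eq_el {w : List GG} (hw : IsWord w) :
    ∃ x y : ℤ, w.prod = el x y (tCount w) ∧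
      (w.length : ℤ) = x + y + 2 * w.count ga⁻¹ + tCount w := by
  induction w with
  | nil => exact ⟨0, 0, one_eq_el, by simp [tCount]⟩
  | cons s w ih =>
    obtain ⟨hs, hw'⟩ := isWord_cons.mp hw
    obtain ⟨x, y, hprod, hlen⟩ := ih hw'
    rcases mem_genSet_iff.mp hs with rfl | rfl | rfl
    · refine ⟨1 + x, y, ?_, ?_⟩
      · rw [List.prod_cons, hprod, tCount_cons_of_ne ga_ne_gt, ga_eq_el, el_zero_mul, zero_add]
      · simp only [List.length_cons, List.count_cons_of_ne ga_ne_ga_inv,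
          tCount_cons_of_ne ga_ne_gt]
        omega
    · refine ⟨-1 + x, y, ?_, ?_⟩
      · rw [List.prod_cons, hprod, tCount_cons_of_ne ga_inv_ne_gt, ga_inv_eq_el, el_zero_mul,
          zero_add]
      · simp only [List.length_cons, List.count_cons_self, tCount_cons_of_ne ga_inv_ne_gt]
        omega
    · refine ⟨y, x, ?_, ?_⟩
      · rw [List.prod_cons, hprod, tCount_cons_gt, gt_eq_el, el_one_mul]; simp [add_comm]
      · simp only [List.length_cons, List.count_cons_of_ne ga_inv_ne_gt.symm, tCount_cons_gt]
        omega

lemma Represents.length_eq {v : List GG} {x y : ℤ} {e : ZMod 2} (hv : Represents v (el x y e)) :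
    (tCount v : ZMod 2) = e ∧ (v.length : ℤ) = x + y + 2 * v.count ga⁻¹ + tCount v := by
  obtain ⟨x', y', hprod, hlen⟩ := hv.1.prod_eq_el
  obtain ⟨rfl, rfl, he⟩ := el_inj.mp (hprod.symm.trans hv.2)
  exact ⟨he, hlen⟩

lemma Represents.add_one_le_length {v : List GG} {x y : ℤ} (hv : Represents v (el x y 1)) :
    x + y + 1 ≤ v.length := by
  obtain ⟨hodd, hlen⟩ := hv.length_eq
  have : 0 < tCount v := (ZMod.natCast_eq_one_iff_odd.mp hodd).pos
  omega

lemma IsWord.eq_replicate_ga {w : List GG} (hw : IsWord w) (ha : w.count ga⁻¹ = 0)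
    (ht : tCount w = 0) : w = List.replicate w.length ga := by
  refine List.eq_replicate_iff.mpr ⟨rfl, fun s hs => ?_⟩
  rcases mem_genSet_iff.mp (hw s hs) with rfl | rfl | rfl
  · rfl
  · exact absurd hs (List.count_eq_zero.mp ha)
  · exact absurd (List.countP_eq_zero.mp ht gt hs) (by simp)

lemma IsWord.eq_replicate_append {w : List GG} (hw : IsWord w) (ha : w.count ga⁻¹ = 0)
    (ht : tCount w = 1) : ∃ j k : ℕ, w = List.replicate j ga ++ gt :: List.replicate k ga := by
  obtain ⟨s, hs, hgt⟩ := List.countP_pos_iff.mp (ht ▸ Nat.one_pos : 0 < tCount w)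
  have hs_gt : s = gt := by simpa [gt_inv] using hgt
  obtain ⟨l, r, rfl⟩ := List.append_of_mem (hs_gt ▸ hs)
  rw [tCount_append, tCount_cons_gt] at ht
  have hl : IsWord l := fun s hs => hw s (by simp [hs])
  have hr : IsWord r := fun s hs => hw s (by simp [hs])
  simp only [List.count_append, List.count_cons, Nat.add_eq_zero_iff] at ha
  exact ⟨l.length, r.length, by
    rw [← hl.eq_replicate_ga ha.1 (by omega), ← hr.eq_replicate_ga ha.2.1 (by omega)]⟩

lemma ga_pow (m : ℕ) : ga ^ m = el m 0 0 := by
  induction m with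
  | zero => rfl
  | succ m ih => rw [pow_succ', ih, ga_eq_el, el_zero_mul]; simp [add_comm]

lemma prod_replicate_append (j k : ℕ) :
    (List.replicate j ga ++ gt :: List.replicate k ga).prod = el j k 1 := by
  simp [ga_pow, gt_eq_el, el_zero_mul, el_one_mul]

lemma Represents.eq_of_length_lt {v : List GG} {j k : ℕ} (hv : Represents v (el j k 1))
    (hlt : v.length < j + k + 3) : v = List.replicate j ga ++ gt :: List.replicate k ga := by
  obtain ⟨hodd, hlen⟩ := hv.length_eq
  obtain ⟨c, hc⟩ : Odd (tCount v) := ZMod.natCast_eq_one_iff_odd.mp hodd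
  obtain ⟨j', k', rfl⟩ := hv.1.eq_replicate_append (by omega) (by omega)
  obtain ⟨hj, hk, -⟩ := el_inj.mp ((prod_replicate_append j' k').symm.trans hv.2)
  rw [Nat.cast_inj.mp hj, Nat.cast_inj.mp hk]

lemma apow_natCast (m : ℕ) : apow m = List.replicate m ga := by
  simp [apow]

theorem unique_shorter_representative_general (n : ℕ) :
    ¬ IsGeodesic ([gt] ++ apow n ++ [gt] ++ apow n ++ [gt]) ∧
    Represents ([gt] ++ apow n ++ [gt] ++ apow n ++ [gt]) (el n n 1) ∧
    Represents (apow n ++ [gt] ++ apow n) (el n n 1) ∧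
    IsGeodesic (apow n ++ [gt] ++ apow n) ∧
    (apow n ++ [gt] ++ apow n).length
      < ([gt] ++ apow n ++ [gt] ++ apow n ++ [gt]).length ∧
    ([gt] ++ apow n ++ [gt] ++ apow n ++ [gt]).length = 2 * n + 3 ∧
    ∀ v : List GG, Represents v (el n n 1) → v ≠ apow n ++ [gt] ++ apow n →
      2 * n + 3 ≤ v.length := by
  have hu : apow n ++ [gt] ++ apow n = List.replicate n ga ++ gt :: List.replicate n ga := by
    simp [apow_natCast]
  have hu_rep : Represents (apow n ++ [gt] ++ apow n) (el n n 1) :=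
    ⟨by simp +contextual [IsWord, GenSet, hu, or_imp], hu ▸ prod_replicate_append n n⟩
  have hw_rep : Represents ([gt] ++ apow n ++ [gt] ++ apow n ++ [gt]) (el n n 1) :=
    ⟨by simp +contextual [IsWord, GenSet, apow_natCast, or_imp],
      by simp [apow_natCast, ga_pow, gt_eq_el, el_zero_mul, el_one_mul, CharTwo.add_self_eq_zero]⟩
  have hu_len : (apow n ++ [gt] ++ apow n).length = 2 * n + 1 := by
    simp only [hu, List.length_append, List.length_replicate, List.length_cons]
    omega
  have hw_len : ([gt] ++ apow n ++ [gt] ++ apow n ++ [gt]).length = 2 * n + 3 := by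
    simp only [apow_natCast, List.length_append, List.length_replicate, List.length_singleton]
    omega
  refine ⟨fun hgeod => ?_, hw_rep, hu_rep, ⟨hu_rep.1, fun v hv hprod => ?_⟩, by omega, hw_len,
    fun v hv hne => ?_⟩
  · have := hgeod.2 _ hu_rep.1 (hu_rep.2.trans hw_rep.2.symm)
    omega
  · have := Represents.add_one_le_length ⟨hv, hprod.trans hu_rep.2⟩
    omega
  · by_contra! hlt
    exact hne ((hv.eq_of_length_lt (by omega)).trans hu.symm)

/-- For every n ≥ 1 the non-geodesic word w = t aⁿ t aⁿ t has a unique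
strictly shorter representative: the geodesic u = aⁿ t aⁿ; every other word
over A representing ((n,n),1) has length at least 2n + 3 = |w|. -/
theorem unique_shorter_representative (n : ℕ) (hn : 1 ≤ n) :
    ¬ IsGeodesic ([gt] ++ apow n ++ [gt] ++ apow n ++ [gt]) ∧
    Represents ([gt] ++ apow n ++ [gt] ++ apow n ++ [gt]) (el n n 1) ∧
    Represents (apow n ++ [gt] ++ apow n) (el n n 1) ∧
    IsGeodesic (apow n ++ [gt] ++ apow n) ∧
    (apow n ++ [gt] ++ apow n).length
      < ([gt] ++ apow n ++ [gt] ++ apow n ++ [gt]).length ∧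
    ([gt] ++ apow n ++ [gt] ++ apow n ++ [gt]).length = 2 * n + 3 ∧
    ∀ v : List GG, Represents v (el n n 1) → v ≠ apow n ++ [gt] ++ apow n →
      2 * n + 3 ≤ v.length :=
  unique_shorter_representative_general n
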